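/- Let T ⊂ ℝ^d be a simplex with barycentric coordinates λ₁,…,λ_{d+1}, faces F_k opposite p_k with unit outer normals n_k. Define θ_i^{(2)} := λ_i(dλ_i − 2)/(2|∇λ_i|) for 1 ≤ i ≤ d+1. Then θ_i^{(2)} ∈ ℙ²(T), the integral of θ_i^{(2)} over every (d−2)-dimensional subsimplex of T vanishes (for d=2: θ_i^{(2)} vanishes at every vertex of T), and (1/|F_k|)∫_{F_k} ∂θ_i^{(2)}/∂n_k ds = δ_{ik}. -/

import Mathlib

open MeasureTheory Set
open scoped InnerProductSpace ENNReal NNReal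

section Morley

variable {d : ℕ}

local notation "Ed" => EuclideanSpace ℝ (Fin d)

/-- Characterization of the convex hull of a sub-family of an affine basis. -/
lemma morley_hull_char (b : AffineBasis (Fin (d+1)) ℝ Ed) (t : Finset (Fin (d+1))) :
    convexHull ℝ (⇑b '' ↑t) =
      {x | (∀ l, 0 ≤ b.coord l x) ∧ ∀ l ∉ t, b.coord l x = 0} := by
  apply Subset.antisymm
  · apply convexHull_min
    · rintro x ⟨j, hj, rfl⟩
      refine ⟨fun l => ?_, fun l hl => ?_⟩
      · rw [b.coord_apply]; split <;> norm_num
      · rw [b.coord_apply, if_neg]; rintro rfl; exact hl hj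
    · have hset : {x | (∀ l, 0 ≤ b.coord l x) ∧ ∀ l ∉ t, b.coord l x = 0} =
          (⋂ l, (b.coord l) ⁻¹' (Ici 0)) ∩ (⋂ l ∈ (↑tᶜ : Set (Fin (d+1))), (b.coord l) ⁻¹' {0}) := by
        ext x
        simp only [mem_setOf_eq, mem_inter_iff, mem_iInter, mem_preimage, mem_Ici,
          mem_singleton_iff, Finset.coe_compl, Set.mem_compl_iff, Finset.mem_coe]
      rw [hset]
      exact (convex_iInter fun l => (convex_Ici 0).affine_preimage (b.coord l)).inter
        (convex_iInter₂ fun l _ => (convex_singleton 0).affine_preimage (b.coord l))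
  · rintro x ⟨h0, hz⟩
    have hsum : ∑ l, b.coord l x = 1 := b.sum_coord_apply_eq_one x
    have hx : Finset.univ.affineCombination ℝ ⇑b (fun l => b.coord l x) = x :=
      b.affineCombination_coord_eq_self x
    have hsum_t : ∑ l ∈ t, b.coord l x = 1 := by
      rw [← hsum]
      exact Finset.sum_subset t.subset_univ (fun l _ hl => hz l hl)
    have hxt : t.affineCombination ℝ ⇑b (fun l => b.coord l x) = x := by
      rw [Finset.affineCombination_indicator_subset _ _ t.subset_univ, ← hx]
      congr 1
      funext l
      by_cases hl : l ∈ t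
      · simp [Set.indicator, hl]
      · simp [Set.indicator, hl, hz l hl]
    rw [← hxt, affineCombination_eq_centerMass hsum_t]
    exact t.centerMass_mem_convexHull (fun l _ => h0 l) (by rw [hsum_t]; norm_num)
      (fun l hl => ⟨l, hl, rfl⟩)

/-- Coordinates of a homothety image. -/
lemma morley_coord_homothety (b : AffineBasis (Fin (d+1)) ℝ Ed) (l i : Fin (d+1)) (r : ℝ) (x : Ed) :
    b.coord l (AffineMap.homothety (b i) r x)
      = b.coord l (b i) + r * (b.coord l x - b.coord l (b i)) := by
  rw [AffineMap.homothety_eq_lineMap, AffineMap.apply_lineMap]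
  simp [AffineMap.lineMap_apply_module]
  ring

/-- The superlevel sets of a barycentric coordinate within a simplex are homothety
images of the simplex. -/
lemma morley_level_eq (b : AffineBasis (Fin (d+1)) ℝ Ed) (u : Finset (Fin (d+1)))
    {i : Fin (d+1)} (hi : i ∈ u) {t : ℝ} (ht0 : 0 ≤ t) (ht1 : t < 1) :
    {x ∈ convexHull ℝ (⇑b '' ↑u) | t ≤ b.coord i x}
      = AffineMap.homothety (b i) (1-t) '' (convexHull ℝ (⇑b '' ↑u)) := by
  have hii : b.coord i (b i) = 1 := by rw [b.coord_apply]; simp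
  ext x
  rw [morley_hull_char]
  simp only [Set.mem_sep_iff, Set.mem_setOf_eq, Set.mem_image]
  constructor
  · rintro ⟨⟨h0, hz⟩, hti⟩
    refine ⟨AffineMap.homothety (b i) (1-t)⁻¹ x, ?_, ?_⟩
    · constructor
      · intro l
        rcases eq_or_ne l i with rfl | hne
        · rw [morley_coord_homothety, hii]
          have h1t : (0:ℝ) < 1 - t := by linarith
          have key : (1-t)⁻¹ * (t - 1) ≤ (1-t)⁻¹ * (b.coord l x - 1) :=
            mul_le_mul_of_nonneg_left (by linarith) (inv_pos.mpr h1t).le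
          have h2 : (1-t)⁻¹ * (t - 1) = -1 := by field_simp; ring
          linarith
        · rw [morley_coord_homothety, b.coord_apply, if_neg hne]
          have h1t : (0:ℝ) < 1 - t := by linarith
          simp only [zero_add, sub_zero]
          exact mul_nonneg (inv_pos.mpr h1t).le (h0 l)
      · intro l hl
        have hne : l ≠ i := fun h => hl (h ▸ hi)
        rw [morley_coord_homothety, b.coord_apply, if_neg hne, hz l hl]
        ring
    · have h1t : (1:ℝ) - t ≠ 0 := by linarith
      simp only [AffineMap.homothety_apply, vsub_eq_sub, vadd_eq_add, add_sub_cancel_right,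
        smul_smul, mul_inv_cancel₀ h1t, one_smul, sub_add_cancel]
  · rintro ⟨y, ⟨h0, hz⟩, rfl⟩
    have h1t : (0:ℝ) ≤ 1 - t := by linarith
    refine ⟨⟨fun l => ?_, fun l hl => ?_⟩, ?_⟩
    · rcases eq_or_ne l i with rfl | hne
      · rw [morley_coord_homothety, hii]
        nlinarith [h0 l]
      · rw [morley_coord_homothety, b.coord_apply, if_neg hne]
        simp only [zero_add, sub_zero]
        exact mul_nonneg h1t (h0 l)
    · have hne : l ≠ i := fun h => hl (h ▸ hi)
      rw [morley_coord_homothety, b.coord_apply, if_neg hne, hz l hl]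
      ring
    · rw [morley_coord_homothety, hii]
      nlinarith [h0 i]


lemma morley_homothety_lipschitz {X : Type*} [NormedAddCommGroup X] [NormedSpace ℝ X]
    (c : X) {r : ℝ} (hr : 0 ≤ r) : LipschitzWith r.toNNReal (AffineMap.homothety c r) := by
  apply LipschitzWith.of_dist_le_mul
  intro x y
  have hdiff : (r • (x - c) + c) - (r • (y - c) + c) = r • (x - y) := by
    rw [smul_sub r x y, smul_sub, smul_sub]; abel
  simp only [AffineMap.homothety_apply, vsub_eq_sub, vadd_eq_add, dist_eq_norm, hdiff, norm_smul]
  rw [Real.coe_toNNReal r hr, Real.norm_eq_abs, abs_of_nonneg hr]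

lemma morley_hausdorff_homothety (c : Ed) {r : ℝ} (hr0 : 0 < r) {m : ℝ} (hm : 0 ≤ m)
    (s : Set Ed) :
    μH[m] (AffineMap.homothety c r '' s) = (ENNReal.ofReal r) ^ m * μH[m] s := by
  have h1 := (morley_homothety_lipschitz c hr0.le).hausdorffMeasure_image_le hm s
  have hcomp : ∀ x : Ed, AffineMap.homothety c r⁻¹ (AffineMap.homothety c r x) = x := fun x => by
    simp only [AffineMap.homothety_apply, vsub_eq_sub, vadd_eq_add, add_sub_cancel_right,
      smul_smul, inv_mul_cancel₀ (ne_of_gt hr0), one_smul, sub_add_cancel]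
  have hinv : AffineMap.homothety c r⁻¹ '' (AffineMap.homothety c r '' s) = s := by
    rw [← Set.image_comp]
    simp only [Function.comp_def, hcomp, Set.image_id']
  have h2 := (morley_homothety_lipschitz c (inv_pos.mpr hr0).le).hausdorffMeasure_image_le hm
    (AffineMap.homothety c r '' s)
  rw [hinv] at h2
  have hcoe : ∀ a : ℝ, ((a.toNNReal : ℝ≥0∞)) = ENNReal.ofReal a := fun a => rfl
  rw [hcoe] at h1 h2
  apply le_antisymm h1
  calc ENNReal.ofReal r ^ m * μH[m] s
      ≤ ENNReal.ofReal r ^ m * (ENNReal.ofReal r⁻¹ ^ m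
          * μH[m] (AffineMap.homothety c r '' s)) := mul_le_mul_right h2 _
    _ = (ENNReal.ofReal r * ENNReal.ofReal r⁻¹) ^ m
          * μH[m] (AffineMap.homothety c r '' s) := by
        rw [← mul_assoc, ← ENNReal.mul_rpow_of_nonneg _ _ hm]
    _ = μH[m] (AffineMap.homothety c r '' s) := by
        rw [← ENNReal.ofReal_mul hr0.le, mul_inv_cancel₀ hr0.ne', ENNReal.ofReal_one,
          ENNReal.one_rpow, one_mul]

lemma morley_meas_level (b : AffineBasis (Fin (d+1)) ℝ Ed) (u : Finset (Fin (d+1)))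
    {i : Fin (d+1)} (hi : i ∈ u) {m : ℝ} (hm : 0 ≤ m) {t : ℝ} (ht0 : 0 ≤ t) (ht1 : t < 1) :
    μH[m] {x ∈ convexHull ℝ (⇑b '' ↑u) | t ≤ b.coord i x}
      = ENNReal.ofReal (1-t) ^ m * μH[m] (convexHull ℝ (⇑b '' ↑u)) := by
  rw [morley_level_eq b u hi ht0 ht1, morley_hausdorff_homothety _ (by linarith) hm]


lemma morley_sum_reindex {α : Type*} [LinearOrder α] {M : Type*} [AddCommMonoid M] (u : Finset α) {k : ℕ}
    (hcard : u.card = k) (f : α → M) :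
    ∑ s : Fin k, f ↑(u.orderIsoOfFin hcard s) = ∑ a ∈ u, f a := by
  rw [← Finset.sum_coe_sort u f]
  exact Equiv.sum_comp (u.orderIsoOfFin hcard).toEquiv (fun a : ↑u => f ↑a)

lemma morley_fin_pos (b : AffineBasis (Fin (d+1)) ℝ Ed) (u : Finset (Fin (d+1)))
    {m : ℕ} (hcard : u.card = m + 1) :
    μH[(m:ℝ)] (convexHull ℝ (⇑b '' ↑u)) < ⊤ ∧ 0 < μH[(m:ℝ)] (convexHull ℝ (⇑b '' ↑u)) := by
  classical
  set Δ : Set Ed := convexHull ℝ (⇑b '' ↑u) with hΔdef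
  set e := u.orderIsoOfFin hcard with he
  set q : Fin (m+1) → Ed := fun s => b ↑(e s) with hq
  have coordq : ∀ (j : Fin (d+1)) (s : Fin (m+1)),
      b.coord j (q s) = if j = ↑(e s) then 1 else 0 := fun j s => b.coord_apply j ↑(e s)
  set ψ : EuclideanSpace ℝ (Fin m) → Ed :=
    fun w => q 0 + ∑ l : Fin m, w l • (q (Fin.succ l) - q 0) with hψ
  set T : Set (EuclideanSpace ℝ (Fin m)) := {w | (∀ l, 0 ≤ w l) ∧ ∑ l, w l ≤ 1} with hT
  set C : EuclideanSpace ℝ (Fin m) → Fin (m+1) → ℝ :=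
    fun w => Fin.cons (1 - ∑ l, w l) (fun l => w l) with hC
  have hcoordψ : ∀ (j : Fin (d+1)) (w : EuclideanSpace ℝ (Fin m)),
      b.coord j (ψ w) = ∑ s, C w s * b.coord j (q s) := by
    intro j w
    have hv : ψ w = (∑ l : Fin m, w l • (q (Fin.succ l) - q 0)) +ᵥ q 0 := by
      simp only [hψ, vadd_eq_add]; abel
    rw [hv, AffineMap.map_vadd, map_sum]
    have hterm : ∀ l : Fin m, (b.coord j).linear (w l • (q (Fin.succ l) - q 0))
        = w l * (b.coord j (q (Fin.succ l)) - b.coord j (q 0)) := by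
      intro l
      rw [LinearMap.map_smul, smul_eq_mul]
      congr 1
      exact (b.coord j).linearMap_vsub (q (Fin.succ l)) (q 0)
    rw [Finset.sum_congr rfl fun l _ => hterm l, Fin.sum_univ_succ]
    simp only [hC, Fin.cons_zero, Fin.cons_succ, vadd_eq_add]
    rw [Finset.sum_congr rfl (fun l (_ : l ∈ Finset.univ) => mul_sub (w l) _ _),
      Finset.sum_sub_distrib, ← Finset.sum_mul]
    ring
  have hval : ∀ (w : EuclideanSpace ℝ (Fin m)) (s₀ : Fin (m+1)),
      b.coord ↑(e s₀) (ψ w) = C w s₀ := by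
    intro w s₀
    rw [hcoordψ]
    have hite : ∀ s, b.coord ↑(e s₀) (q s) = if s₀ = s then 1 else 0 := by
      intro s
      rw [coordq]
      by_cases h : s₀ = s
      · rw [if_pos (by rw [h]), if_pos h]
      · rw [if_neg (fun hc => h (e.injective (Subtype.coe_injective hc))), if_neg h]
    simp only [hite, mul_ite, mul_one, mul_zero]
    simp [Finset.sum_ite_eq]
  have hzero : ∀ (w : EuclideanSpace ℝ (Fin m)) (j : Fin (d+1)), j ∉ u
      → b.coord j (ψ w) = 0 := by
    intro w j hj
    rw [hcoordψ]
    apply Finset.sum_eq_zero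
    intro s _
    rw [coordq, if_neg (fun h => hj (by rw [h]; exact (e s).2)), mul_zero]
  have hCnonneg : ∀ w ∈ T, ∀ s, 0 ≤ C w s := by
    rintro w ⟨h0, h1⟩ s
    induction s using Fin.cases with
    | zero => simp only [hC, Fin.cons_zero]; linarith
    | succ l => simp only [hC, Fin.cons_succ]; exact h0 l
  have hψT : ∀ w ∈ T, ψ w ∈ Δ := by
    intro w hw
    rw [hΔdef, morley_hull_char]
    refine ⟨fun l => ?_, fun l hl => hzero w l hl⟩
    by_cases hl : l ∈ u
    · obtain ⟨s₀, hs₀⟩ : ∃ s₀, (↑(e s₀) : Fin (d+1)) = l := ⟨e.symm ⟨l, hl⟩, by simp⟩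
      rw [← hs₀, hval]
      exact hCnonneg w hw s₀
    · rw [hzero w l hl]
  have hmemΔ : ∀ x ∈ Δ, (∀ l, 0 ≤ b.coord l x) ∧ ∀ l ∉ u, b.coord l x = 0 := by
    intro x hx; rwa [hΔdef, morley_hull_char] at hx
  have hsum_u : ∀ x ∈ Δ, ∑ s : Fin (m+1), b.coord ↑(e s) x = 1 := by
    intro x hx
    rw [he, morley_sum_reindex u hcard (fun a => b.coord a x),
      Finset.sum_subset u.subset_univ (fun l _ hl => (hmemΔ x hx).2 l hl)]
    exact b.sum_coord_apply_eq_one x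
  have hx_comb : ∀ x ∈ Δ, x = ∑ s : Fin (m+1), b.coord ↑(e s) x • q s := by
    intro x hx
    have hsum_t : ∑ a ∈ u, b.coord a x = 1 := by
      rw [← morley_sum_reindex u hcard (fun a => b.coord a x), ← he]
      exact hsum_u x hx
    have hxt : u.affineCombination ℝ ⇑b (fun l => b.coord l x) = x := by
      rw [Finset.affineCombination_indicator_subset _ _ u.subset_univ,
        ← b.affineCombination_coord_eq_self x]
      congr 1
      funext l
      by_cases hl : l ∈ u
      · simp [Set.indicator, hl]
      · simp [Set.indicator, hl, (hmemΔ x hx).2 l hl]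
    conv_lhs => rw [← hxt, Finset.affineCombination_eq_linear_combination _ _ _ hsum_t]
    exact (morley_sum_reindex u hcard (fun a => b.coord a x • b a)).symm
  have hΔT : Δ ⊆ ψ '' T := by
    intro x hx
    obtain ⟨h0, hz⟩ := hmemΔ x hx
    set w : EuclideanSpace ℝ (Fin m) :=
      (WithLp.equiv 2 (Fin m → ℝ)).symm (fun l => b.coord ↑(e (Fin.succ l)) x) with hw
    have hwl : ∀ l, w l = b.coord ↑(e (Fin.succ l)) x := fun l => rfl
    have hsum1 := hsum_u x hx
    rw [Fin.sum_univ_succ] at hsum1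
    have hwT : w ∈ T := by
      refine ⟨fun l => by rw [hwl]; exact h0 _, ?_⟩
      have : ∑ l : Fin m, w l = ∑ l : Fin m, b.coord ↑(e (Fin.succ l)) x :=
        Finset.sum_congr rfl fun l _ => hwl l
      rw [this]
      have := h0 ↑(e 0)
      linarith
    refine ⟨w, hwT, ?_⟩
    rw [hx_comb x hx, Fin.sum_univ_succ]
    have hc0 : b.coord ↑(e 0) x = 1 - ∑ l : Fin m, w l := by
      have : ∑ l : Fin m, w l = ∑ l : Fin m, b.coord ↑(e (Fin.succ l)) x :=
        Finset.sum_congr rfl fun l _ => hwl l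
      rw [this]; linarith
    have hterm : ∀ l : Fin m, b.coord ↑(e (Fin.succ l)) x • q (Fin.succ l)
        = w l • q (Fin.succ l) := fun l => by rw [hwl]
    rw [Finset.sum_congr rfl fun l _ => hterm l, hc0, sub_smul, one_smul]
    simp only [hψ, smul_sub]
    rw [Finset.sum_sub_distrib, ← Finset.sum_smul]
    abel
  -- Lipschitz bound for ψ
  set Kψ : ℝ≥0 := (∑ l : Fin m, ‖q (Fin.succ l) - q 0‖).toNNReal with hKψ
  have hψlip : LipschitzWith Kψ ψ := by
    apply LipschitzWith.of_dist_le_mul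
    intro w w'
    have hdiff : ψ w - ψ w' = ∑ l, (w l - w' l) • (q (Fin.succ l) - q 0) := by
      simp only [hψ]
      rw [Finset.sum_congr rfl (fun l (_ : l ∈ Finset.univ) => sub_smul (w l) (w' l) _),
        Finset.sum_sub_distrib]
      abel
    rw [dist_eq_norm, hdiff]
    have hcoordbd : ∀ l : Fin m, |w l - w' l| ≤ dist w w' := by
      intro l
      have h1 : dist (w l) (w' l)
          ≤ dist (WithLp.equiv 2 (Fin m → ℝ) w) (WithLp.equiv 2 (Fin m → ℝ) w') :=
        dist_le_pi_dist (WithLp.equiv 2 (Fin m → ℝ) w) (WithLp.equiv 2 (Fin m → ℝ) w') l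
      have h2 := (PiLp.lipschitzWith_ofLp 2 (fun _ : Fin m => ℝ)).dist_le_mul w w'
      rw [Real.dist_eq] at h1
      simp only [NNReal.coe_one, one_mul] at h2
      exact h1.trans h2
    calc ‖∑ l, (w l - w' l) • (q (Fin.succ l) - q 0)‖
        ≤ ∑ l, ‖(w l - w' l) • (q (Fin.succ l) - q 0)‖ := norm_sum_le _ _
      _ ≤ ∑ l, dist w w' * ‖q (Fin.succ l) - q 0‖ := by
          refine Finset.sum_le_sum fun l _ => ?_
          rw [norm_smul, Real.norm_eq_abs]
          exact mul_le_mul_of_nonneg_right (hcoordbd l) (norm_nonneg _)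
      _ = (∑ l : Fin m, ‖q (Fin.succ l) - q 0‖) * dist w w' := by
          rw [← Finset.mul_sum, mul_comm]
      _ = Kψ * dist w w' := by
          rw [hKψ, Real.coe_toNNReal _ (Finset.sum_nonneg fun l _ => norm_nonneg _)]
  -- Lipschitz map χ with T ⊆ χ '' Δ
  set A : Ed → (Fin m → ℝ) := fun x l => b.coord ↑(e (Fin.succ l)) x with hA
  set G : Fin m → Ed →L[ℝ] ℝ :=
    fun l => LinearMap.toContinuousLinearMap (b.coord ↑(e (Fin.succ l))).linear with hG
  set KA : ℝ≥0 := Finset.univ.sup (fun l : Fin m => ‖G l‖₊) with hKA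
  have hAlip : LipschitzWith KA A := by
    apply LipschitzWith.of_dist_le_mul
    intro x y
    rw [dist_pi_le_iff (by positivity)]
    intro l
    have hdiff : A x l - A y l = G l (x - y) := by
      simp only [hA, hG, LinearMap.coe_toContinuousLinearMap']
      exact ((b.coord ↑(e (Fin.succ l))).linearMap_vsub x y).symm
    rw [Real.dist_eq, hdiff]
    calc |G l (x - y)| ≤ ‖G l‖ * ‖x - y‖ := (G l).le_opNorm _
      _ ≤ KA * dist x y := by
          rw [dist_eq_norm]
          refine mul_le_mul_of_nonneg_right ?_ (norm_nonneg _)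
          calc ‖G l‖ = ((‖G l‖₊ : ℝ)) := (coe_nnnorm _).symm
            _ ≤ KA := NNReal.coe_le_coe.mpr (Finset.le_sup (f := fun l : Fin m => ‖G l‖₊) (Finset.mem_univ l))
  have hanti := PiLp.antilipschitzWith_ofLp 2 (fun _ : Fin m => ℝ)
  obtain ⟨Ks, hsymmlip⟩ : ∃ Ks : ℝ≥0, LipschitzWith Ks ⇑(WithLp.equiv 2 (Fin m → ℝ)).symm :=
    ⟨_, fun a b' => by
      simpa using hanti ((WithLp.equiv 2 (Fin m → ℝ)).symm a)
        ((WithLp.equiv 2 (Fin m → ℝ)).symm b')⟩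
  set χ : Ed → EuclideanSpace ℝ (Fin m) := ⇑(WithLp.equiv 2 (Fin m → ℝ)).symm ∘ A with hχ
  have hχlip : LipschitzWith (Ks * KA) χ := hsymmlip.comp hAlip
  have hTχ : T ⊆ χ '' Δ := by
    intro w hw
    refine ⟨ψ w, hψT w hw, ?_⟩
    have hAψ : A (ψ w) = WithLp.equiv 2 (Fin m → ℝ) w := by
      funext l
      simp only [hA]; change _ = w l
      rw [hval w (Fin.succ l)]
      simp [hC]
    simp only [hχ, Function.comp_apply, hAψ, Equiv.symm_apply_apply]
  -- transfer to the pi space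
  set Tpi : Set (Fin m → ℝ) := {v | (∀ l, 0 ≤ v l) ∧ ∑ l, v l ≤ 1} with hTpi
  have hTim : ⇑(WithLp.equiv 2 (Fin m → ℝ)) '' T = Tpi := by
    ext v
    constructor
    · rintro ⟨w, hw, rfl⟩
      exact hw
    · intro hv
      exact ⟨(WithLp.equiv 2 (Fin m → ℝ)).symm v, hv, by simp⟩
  have hpi_vol : (μH[(m:ℝ)] : Measure (Fin m → ℝ)) = volume := by
    simpa using MeasureTheory.hausdorffMeasure_pi_real (ι := Fin m)
  have hm0 : (0:ℝ) ≤ (m:ℝ) := Nat.cast_nonneg m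
  have hT_up := hanti.le_hausdorffMeasure_image hm0 T
  rw [show WithLp.ofLp '' T = Tpi from hTim, hpi_vol] at hT_up
  have hTpi_fin : volume Tpi ≤ 1 := by
    have hsub : Tpi ⊆ Set.pi Set.univ (fun _ : Fin m => Icc (0:ℝ) 1) := by
      rintro v ⟨h0, h1⟩
      rw [Set.mem_pi]
      intro l _
      exact ⟨h0 l, le_trans (Finset.single_le_sum (fun l' _ => h0 l') (Finset.mem_univ l)) h1⟩
    calc volume Tpi ≤ volume (Set.pi Set.univ fun _ : Fin m => Icc (0:ℝ) 1) :=
          measure_mono hsub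
      _ = 1 := by rw [volume_pi_pi]; simp [Real.volume_Icc]
  have hTpi_pos : 0 < volume Tpi := by
    have hsub : Set.pi Set.univ (fun _ : Fin m => Ioo (0:ℝ) (1/((m:ℝ)+1))) ⊆ Tpi := by
      intro v hv
      rw [Set.mem_pi] at hv
      refine ⟨fun l => (hv l (Set.mem_univ l)).1.le, ?_⟩
      calc ∑ l, v l ≤ ∑ _l : Fin m, 1/((m:ℝ)+1) :=
            Finset.sum_le_sum fun l _ => (hv l (Set.mem_univ l)).2.le
        _ = m * (1/((m:ℝ)+1)) := by rw [Finset.sum_const, Finset.card_univ, Fintype.card_fin,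
            nsmul_eq_mul]
        _ ≤ 1 := by rw [mul_one_div, div_le_one (by positivity)]; linarith
    refine lt_of_lt_of_le ?_ (measure_mono hsub)
    rw [volume_pi_pi]
    rw [pos_iff_ne_zero, Ne, Finset.prod_eq_zero_iff]
    rintro ⟨l, -, hl⟩
    rw [Real.volume_Ioo, ENNReal.ofReal_eq_zero] at hl
    have : (0:ℝ) < 1/((m:ℝ)+1) := by positivity
    linarith
  constructor
  · have h1 : μH[(m:ℝ)] Δ ≤ (Kψ : ℝ≥0∞) ^ (m:ℝ) * μH[(m:ℝ)] T :=
      le_trans (measure_mono hΔT) (hψlip.hausdorffMeasure_image_le hm0 T)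
    have h2 : μH[(m:ℝ)] T < ⊤ :=
      lt_of_le_of_lt hT_up
        (ENNReal.mul_lt_top (ENNReal.rpow_lt_top_of_nonneg hm0 ENNReal.coe_ne_top)
          (lt_of_le_of_lt hTpi_fin ENNReal.one_lt_top))
    exact lt_of_le_of_lt h1
      (ENNReal.mul_lt_top (ENNReal.rpow_lt_top_of_nonneg hm0 ENNReal.coe_ne_top) h2)
  · have h3 : volume Tpi ≤ μH[(m:ℝ)] T := by
      have hle := (PiLp.lipschitzWith_ofLp 2 (fun _ : Fin m => ℝ)).hausdorffMeasure_image_le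
        hm0 T
      rw [show WithLp.ofLp '' T = Tpi from hTim, hpi_vol] at hle
      simpa using hle
    have h4 : μH[(m:ℝ)] T ≤ ((Ks * KA : ℝ≥0) : ℝ≥0∞) ^ (m:ℝ) * μH[(m:ℝ)] Δ :=
      le_trans (measure_mono hTχ) (hχlip.hausdorffMeasure_image_le hm0 Δ)
    rw [pos_iff_ne_zero]
    intro hΔ0
    rw [hΔ0, mul_zero] at h4
    exact hTpi_pos.not_ge (h3.trans h4)


lemma morley_hull_compact (b : AffineBasis (Fin (d+1)) ℝ Ed) (u : Finset (Fin (d+1))) :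
    IsCompact (convexHull ℝ (⇑b '' ↑u)) :=
  (u.finite_toSet.image ⇑b).isCompact_convexHull ℝ

lemma morley_hull_measurable (b : AffineBasis (Fin (d+1)) ℝ Ed) (u : Finset (Fin (d+1))) :
    MeasurableSet (convexHull ℝ (⇑b '' ↑u)) :=
  (morley_hull_compact b u).isClosed.measurableSet

lemma morley_coord_le_one (b : AffineBasis (Fin (d+1)) ℝ Ed) (u : Finset (Fin (d+1)))
    (i : Fin (d+1)) {x : Ed} (hx : x ∈ convexHull ℝ (⇑b '' ↑u)) :
    0 ≤ b.coord i x ∧ b.coord i x ≤ 1 := by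
  rw [morley_hull_char] at hx
  refine ⟨hx.1 i, ?_⟩
  have hsum : ∑ l, b.coord l x = 1 := b.sum_coord_apply_eq_one x
  have := Finset.single_le_sum (f := fun l => b.coord l x) (fun l _ => hx.1 l)
    (Finset.mem_univ i)
  linarith

lemma morley_integrable (b : AffineBasis (Fin (d+1)) ℝ Ed) (u : Finset (Fin (d+1)))
    {m : ℝ} (hfin : μH[m] (convexHull ℝ (⇑b '' ↑u)) < ⊤)
    {f : Ed → ℝ} (hf : Continuous f) {M : ℝ}
    (hbd : ∀ x ∈ convexHull ℝ (⇑b '' ↑u), |f x| ≤ M) :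
    Integrable f ((μH[m] : Measure Ed).restrict (convexHull ℝ (⇑b '' ↑u))) := by
  have : IsFiniteMeasure ((μH[m] : Measure Ed).restrict (convexHull ℝ (⇑b '' ↑u))) :=
    ⟨by rwa [Measure.restrict_apply_univ]⟩
  refine Integrable.mono' (integrable_const M) hf.aestronglyMeasurable ?_
  rw [ae_restrict_iff' (morley_hull_measurable b u)]
  exact Filter.Eventually.of_forall (fun x hx => by simpa using hbd x hx)

lemma morley_coord_continuous (b : AffineBasis (Fin (d+1)) ℝ Ed) (i : Fin (d+1)) :
    Continuous fun x : Ed => b.coord i x :=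
  (b.coord i).continuous_of_finiteDimensional

lemma morley_integral_pow (b : AffineBasis (Fin (d+1)) ℝ Ed) (u : Finset (Fin (d+1)))
    {i : Fin (d+1)} (hi : i ∈ u) {m : ℕ} (hm : 1 ≤ m)
    (hfin : μH[(m:ℝ)] (convexHull ℝ (⇑b '' ↑u)) < ⊤) :
    (∫ x in convexHull ℝ (⇑b '' ↑u), b.coord i x ∂(μH[(m:ℝ)]))
        = (μH[(m:ℝ)] (convexHull ℝ (⇑b '' ↑u))).toReal / (m+1)
    ∧ (∫ x in convexHull ℝ (⇑b '' ↑u), (b.coord i x)^2 ∂(μH[(m:ℝ)]))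
        = 2 * (μH[(m:ℝ)] (convexHull ℝ (⇑b '' ↑u))).toReal / ((m+1)*(m+2)) := by
  classical
  set Δ : Set Ed := convexHull ℝ (⇑b '' ↑u) with hΔdef
  set c : ℝ := (μH[(m:ℝ)] Δ).toReal with hc
  have hΔmeas : MeasurableSet Δ := morley_hull_measurable b u
  have hcont : Continuous fun x : Ed => b.coord i x := morley_coord_continuous b i
  have h01 : ∀ x ∈ Δ, 0 ≤ b.coord i x ∧ b.coord i x ≤ 1 :=
    fun x hx => morley_coord_le_one b u i hx
  have hnn : 0 ≤ᵐ[(μH[(m:ℝ)] : Measure Ed).restrict Δ] fun x => b.coord i x :=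
    (ae_restrict_iff' hΔmeas).mpr (Filter.Eventually.of_forall (fun x hx => (h01 x hx).1))
  have hnn2 : 0 ≤ᵐ[(μH[(m:ℝ)] : Measure Ed).restrict Δ] fun x => (b.coord i x)^2 :=
    Filter.Eventually.of_forall (fun x => sq_nonneg _)
  have hbd : (fun x => b.coord i x) ≤ᵐ[(μH[(m:ℝ)] : Measure Ed).restrict Δ] fun _ => (1:ℝ) :=
    (ae_restrict_iff' hΔmeas).mpr (Filter.Eventually.of_forall (fun x hx => (h01 x hx).2))
  have hbd2 : (fun x => (b.coord i x)^2) ≤ᵐ[(μH[(m:ℝ)] : Measure Ed).restrict Δ]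
      fun _ => (1:ℝ) :=
    (ae_restrict_iff' hΔmeas).mpr (Filter.Eventually.of_forall (fun x hx => by
      obtain ⟨h0, h1⟩ := h01 x hx
      show (b.coord i) x ^ 2 ≤ 1
      nlinarith))
  have hint1 : Integrable (fun x => b.coord i x) ((μH[(m:ℝ)] : Measure Ed).restrict Δ) :=
    morley_integrable b u hfin hcont (M := 1)
      (fun x hx => by rw [abs_of_nonneg (h01 x hx).1]; exact (h01 x hx).2)
  have hint2 : Integrable (fun x => (b.coord i x)^2) ((μH[(m:ℝ)] : Measure Ed).restrict Δ) :=
    morley_integrable b u hfin (hcont.pow 2) (M := 1)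
      (fun x hx => by
        obtain ⟨h0, h1⟩ := h01 x hx
        rw [abs_of_nonneg (sq_nonneg _)]
        nlinarith)
  -- the measure of level sets, in toReal form
  have hlev : ∀ t : ℝ, t ∈ Ioo (0:ℝ) 1 →
      (((μH[(m:ℝ)] : Measure Ed).restrict Δ) {x | t ≤ b.coord i x}).toReal = (1-t)^m * c := by
    intro t ht
    rw [Measure.restrict_apply (measurableSet_le measurable_const hcont.measurable)]
    have hset : {x | t ≤ b.coord i x} ∩ Δ = {x ∈ Δ | t ≤ b.coord i x} := by
      ext y; exact ⟨fun ⟨h1, h2⟩ => ⟨h2, h1⟩, fun ⟨h1, h2⟩ => ⟨h2, h1⟩⟩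
    rw [hset, hΔdef, morley_meas_level b u hi (Nat.cast_nonneg m) ht.1.le ht.2,
      ENNReal.rpow_natCast, ENNReal.toReal_mul, ENNReal.toReal_pow,
      ENNReal.toReal_ofReal (by linarith [ht.2] : (0:ℝ) ≤ 1 - t)]
  have hm1 : (0:ℝ) < (m:ℝ)+1 := by positivity
  have hm2 : (0:ℝ) < (m:ℝ)+2 := by positivity
  constructor
  · rw [hint1.integral_eq_integral_Ioc_meas_le hnn hbd, integral_Ioc_eq_integral_Ioo,
      setIntegral_congr_fun measurableSet_Ioo (fun t ht => (measureReal_def _ _).trans (hlev t ht)),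
      ← integral_Ioc_eq_integral_Ioo, ← intervalIntegral.integral_of_le zero_le_one]
    have hsub := intervalIntegral.integral_comp_sub_left (a := (0:ℝ)) (b := 1)
      (fun s => s^m * c) 1
    simp only [show (1:ℝ)-1 = 0 from by norm_num, show (1:ℝ)-0 = 1 from by norm_num] at hsub
    rw [hsub, intervalIntegral.integral_mul_const, integral_pow, one_pow,
      zero_pow (Nat.succ_ne_zero m)]
    field_simp
    ring
  · rw [hint2.integral_eq_integral_Ioc_meas_le hnn2 hbd2, integral_Ioc_eq_integral_Ioo]
    have hlev2 : ∀ t ∈ Ioo (0:ℝ) 1,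
        (((μH[(m:ℝ)] : Measure Ed).restrict Δ) {x | t ≤ (b.coord i x)^2}).toReal
          = (1 - Real.sqrt t)^m * c := by
      intro t ht
      have hsqlt : Real.sqrt t < 1 := by
        have h := Real.sqrt_lt_sqrt ht.1.le ht.2
        rwa [Real.sqrt_one] at h
      have hset : {x | t ≤ (b.coord i x)^2} ∩ Δ = {x ∈ Δ | Real.sqrt t ≤ b.coord i x} := by
        ext y
        simp only [mem_inter_iff, mem_setOf_eq, mem_sep_iff]
        constructor
        · rintro ⟨h1, h2⟩
          refine ⟨h2, ?_⟩
          calc Real.sqrt t ≤ Real.sqrt ((b.coord i y)^2) := Real.sqrt_le_sqrt h1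
            _ = b.coord i y := Real.sqrt_sq (h01 y h2).1
        · rintro ⟨h2, h1⟩
          refine ⟨?_, h2⟩
          have h0 : 0 ≤ Real.sqrt t := Real.sqrt_nonneg t
          calc t = (Real.sqrt t)^2 := (Real.sq_sqrt ht.1.le).symm
            _ ≤ (b.coord i y)^2 := by nlinarith
      rw [Measure.restrict_apply (measurableSet_le measurable_const (by fun_prop : Measurable fun x => b.coord i x ^ 2)),
        hset, hΔdef, morley_meas_level b u hi (Nat.cast_nonneg m) (Real.sqrt_nonneg t) hsqlt,
        ENNReal.rpow_natCast, ENNReal.toReal_mul, ENNReal.toReal_pow,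
        ENNReal.toReal_ofReal (by linarith : (0:ℝ) ≤ 1 - Real.sqrt t)]
    rw [setIntegral_congr_fun measurableSet_Ioo (fun t ht => (measureReal_def _ _).trans (hlev2 t ht)), ← integral_Ioc_eq_integral_Ioo,
      ← intervalIntegral.integral_of_le zero_le_one]
    have hgcont : Continuous fun s : ℝ => (1 - Real.sqrt s)^m * c :=
      ((continuous_const.sub Real.continuous_sqrt).pow m).mul continuous_const
    have hderiv : ∀ x ∈ uIcc (0:ℝ) 1, HasDerivAt (fun u : ℝ => u^2) (2*x) x := by
      intro x _
      simpa using hasDerivAt_pow 2 x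
    have hsubst := intervalIntegral.integral_comp_mul_deriv hderiv
      ((continuous_const.mul continuous_id).continuousOn) hgcont
    simp only [Function.comp_def] at hsubst
    simp only [show ((0:ℝ)^2) = 0 from by norm_num, show ((1:ℝ)^2) = 1 from by norm_num] at hsubst
    rw [← hsubst]
    have hcongr : ∫ x in (0:ℝ)..1, (1 - Real.sqrt (x^2))^m * c * (2*x)
        = ∫ x in (0:ℝ)..1, (1-x)^m * c * (2*x) := by
      apply intervalIntegral.integral_congr
      intro x hx
      rw [uIcc_of_le zero_le_one] at hx
      show (1 - Real.sqrt (x^2))^m * c * (2*x) = (1-x)^m * c * (2*x)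
      rw [Real.sqrt_sq hx.1]
    rw [hcongr]
    have hsub2 := intervalIntegral.integral_comp_sub_left (a := (0:ℝ)) (b := 1)
      (fun v => v^m * c * (2*(1-v))) 1
    simp only [show (1:ℝ)-1 = 0 from by norm_num, show (1:ℝ)-0 = 1 from by norm_num] at hsub2
    have hflip : ∫ x in (0:ℝ)..1, (1-x)^m * c * (2*x)
        = ∫ v in (0:ℝ)..1, v^m * c * (2*(1-v)) := by
      rw [← hsub2]
      apply intervalIntegral.integral_congr
      intro x _
      show (1-x)^m * c * (2*x) = (1-x)^m * c * (2*(1-(1-x)))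
      ring_nf
    rw [hflip]
    have h1 : (fun v : ℝ => v^m * c * (2*(1-v)))
        = fun v => (2*c) * v^m - (2*c) * v^(m+1) := by
      funext v; ring
    rw [h1, intervalIntegral.integral_sub
        ((by fun_prop : Continuous fun v : ℝ => (2*c) * v^m).intervalIntegrable 0 1)
        ((by fun_prop : Continuous fun v : ℝ => (2*c) * v^(m+1)).intervalIntegrable 0 1),
      intervalIntegral.integral_const_mul, intervalIntegral.integral_const_mul,
      integral_pow, integral_pow, one_pow, zero_pow (Nat.succ_ne_zero m),
      zero_pow (Nat.succ_ne_zero (m+1))]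
    push_cast
    field_simp
    ring


lemma morley_normal (hd : 2 ≤ d) (b : AffineBasis (Fin (d+1)) ℝ Ed) (i : Fin (d+1))
    (g : Ed) (hgc : ∀ x y : Ed, b.coord i x - b.coord i y = ⟪g, x - y⟫_ℝ)
    (ni : Ed) (hn : ‖ni‖ = 1)
    (hperp : ∀ x ∈ convexHull ℝ (⇑b '' ↑(({i} : Finset (Fin (d+1)))ᶜ)),
      ∀ y ∈ convexHull ℝ (⇑b '' ↑(({i} : Finset (Fin (d+1)))ᶜ)), ⟪ni, x - y⟫_ℝ = 0)
    (houter : ∀ x ∈ convexHull ℝ (⇑b '' ↑(({i} : Finset (Fin (d+1)))ᶜ)),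
      ⟪ni, b i - x⟫_ℝ < 0) :
    ⟪g, ni⟫_ℝ = -‖g‖ := by
  classical
  set F : Set Ed := convexHull ℝ (⇑b '' ↑(({i} : Finset (Fin (d+1)))ᶜ)) with hFdef
  obtain ⟨j₀, hj₀⟩ : ∃ j : Fin (d+1), j ≠ i := by
    rcases eq_or_ne i ⟨0, by omega⟩ with h | h
    · exact ⟨⟨1, by omega⟩, by rw [h]; simp [Fin.ext_iff]⟩
    · exact ⟨⟨0, by omega⟩, fun hc => h (hc ▸ rfl)⟩
  have hbmem : ∀ l : Fin (d+1), l ≠ i → b l ∈ F := by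
    intro l hl
    apply subset_convexHull
    exact ⟨l, by simp [hl], rfl⟩
  have hcoordbj : ∀ l : Fin (d+1), b.coord i (b l) = if i = l then 1 else 0 :=
    fun l => b.coord_apply i l
  have hinner1 : ⟪g, b i - b j₀⟫_ℝ = 1 := by
    rw [← hgc (b i) (b j₀), hcoordbj, hcoordbj, if_pos rfl, if_neg (Ne.symm hj₀)]
    norm_num
  have hg : g ≠ 0 := by
    intro h
    rw [h] at hinner1
    simp at hinner1
  have hgnorm : (0:ℝ) < ‖g‖ := norm_pos_iff.mpr hg
  -- main step: ni annihilates the orthogonal complement of g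
  have hnv : ∀ v : Ed, ⟪g, v⟫_ℝ = 0 → ⟪ni, v⟫_ℝ = 0 := by
    intro v hv
    set x : Ed := b j₀ + v with hx
    have hsum1 : ∑ l, b.coord l x = 1 := b.sum_coord_apply_eq_one x
    have hxc : x = ∑ l, b.coord l x • b l := by
      conv_lhs => rw [← b.affineCombination_coord_eq_self x]
      exact Finset.affineCombination_eq_linear_combination _ _ _ hsum1
    have hvsum : v = ∑ l, b.coord l x • (b l - b j₀) := by
      have : ∑ l, b.coord l x • (b l - b j₀)
          = (∑ l, b.coord l x • b l) - (∑ l, b.coord l x) • b j₀ := by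
        rw [Finset.sum_smul]
        rw [← Finset.sum_sub_distrib]
        exact Finset.sum_congr rfl fun l _ => smul_sub _ _ _
      rw [this, ← hxc, hsum1, one_smul, hx]
      abel
    rw [hvsum, inner_sum]
    apply Finset.sum_eq_zero
    intro l _
    rcases eq_or_ne l i with rfl | hne
    · have hci : b.coord l x = 0 := by
        have h0 : b.coord l (b j₀) = 0 := by rw [hcoordbj, if_neg (Ne.symm hj₀)]
        have := hgc x (b j₀)
        rw [h0, sub_zero] at this
        rw [this]
        have : x - b j₀ = v := by rw [hx]; abel
        rw [this, hv]
      rw [real_inner_smul_right, hci, zero_mul]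
    · rw [real_inner_smul_right, hperp (b l) (hbmem l hne) (b j₀) (hbmem j₀ hj₀), mul_zero]
  -- hence ni is a multiple of g
  have hmem : ni ∈ (ℝ ∙ g) := by
    rw [← Submodule.orthogonal_orthogonal (ℝ ∙ g)]
    rw [Submodule.mem_orthogonal]
    intro u hu
    have hgu : ⟪g, u⟫_ℝ = 0 := by
      rw [Submodule.mem_orthogonal] at hu
      exact hu g (Submodule.mem_span_singleton_self g)
    rw [real_inner_comm]
    exact hnv u hgu
  obtain ⟨r, hr⟩ := Submodule.mem_span_singleton.mp hmem
  have hrneg : r < 0 := by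
    have h1 := houter (b j₀) (hbmem j₀ hj₀)
    rw [← hr, real_inner_smul_left, hinner1, mul_one] at h1
    exact h1
  have hnorm : |r| * ‖g‖ = 1 := by
    rw [← Real.norm_eq_abs, ← norm_smul, hr, hn]
  have hr' : r = -(1 / ‖g‖) := by
    rw [abs_of_neg hrneg] at hnorm
    field_simp at hnorm ⊢
    linarith
  rw [← hr, real_inner_smul_right, hr', real_inner_self_eq_norm_mul_norm]
  field_simp

lemma morley_fderiv (g : Ed) (cst : ℝ) (N : ℝ) (θf : Ed → ℝ)
    (hθf : ∀ y : Ed, θf y = (⟪g, y⟫_ℝ + cst) * ((d:ℝ) * (⟪g, y⟫_ℝ + cst) - 2) / (2 * N))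
    (x v : Ed) :
    fderiv ℝ θf x v = (2*(d:ℝ)*(⟪g, x⟫_ℝ + cst) - 2) / (2*N) * ⟪g, v⟫_ℝ := by
  have h0 : HasFDerivAt (fun y : Ed => ⟪g, y⟫_ℝ + cst) (innerSL ℝ g) x := by
    simpa using ((innerSL ℝ g).hasFDerivAt (x := x)).add_const cst
  have h1 : HasFDerivAt (fun y : Ed => (d:ℝ) * (⟪g, y⟫_ℝ + cst) - 2)
      ((d:ℝ) • (innerSL ℝ g)) x := (h0.const_mul (d:ℝ)).sub_const 2
  have h2 := (h0.mul h1).mul_const (2*N)⁻¹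
  have h3 : HasFDerivAt θf
      (((2*(d:ℝ)*(⟪g, x⟫_ℝ + cst) - 2) / (2*N)) • (innerSL ℝ g)) x := by
    refine HasFDerivAt.congr_of_eventuallyEq (h2.congr_fderiv ?_) (Filter.Eventually.of_forall fun y => ?_)
    · ext w
      simp only [ContinuousLinearMap.smul_apply, ContinuousLinearMap.add_apply,
        ContinuousLinearMap.coe_smul', Pi.smul_apply, smul_eq_mul]
      ring
    · rw [hθf y, div_eq_mul_inv]; rfl
  rw [h3.fderiv]
  simp only [ContinuousLinearMap.smul_apply, smul_eq_mul, innerSL_apply_apply]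


/-- Morley normal-derivative shape functions: with barycentric coordinates
`λ i` on a simplex in `ℝ^d` (`∇λ i = grad i`), the functions
`θ i := λ i (d λ i - 2)/(2|∇λ i|)` are quadratic (`ℙ²`), have vanishing integral
over every `(d-2)`-dimensional subsimplex `S j k`, and their mean normal
derivative over the face `F k` equals `δ_{ik}`. -/
theorem morley_shape_functions {d : ℕ} (hd : 2 ≤ d)
    (b : AffineBasis (Fin (d + 1)) ℝ (EuclideanSpace ℝ (Fin d)))
    (F : Fin (d + 1) → Set (EuclideanSpace ℝ (Fin d)))
    (hF : ∀ k, F k = convexHull ℝ ((⇑b) '' ({k} : Set (Fin (d + 1)))ᶜ))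
    (S : Fin (d + 1) → Fin (d + 1) → Set (EuclideanSpace ℝ (Fin d)))
    (hS : ∀ j k, S j k = convexHull ℝ ((⇑b) '' ({j, k} : Set (Fin (d + 1)))ᶜ))
    (n : Fin (d + 1) → EuclideanSpace ℝ (Fin d))
    (hn : ∀ k, ‖n k‖ = 1)
    (hperp : ∀ k, ∀ x ∈ F k, ∀ y ∈ F k, ⟪n k, x - y⟫_ℝ = 0)
    (houter : ∀ k, ∀ x ∈ F k, ⟪n k, b k - x⟫_ℝ < 0)
    (grad : Fin (d + 1) → EuclideanSpace ℝ (Fin d)) (cst : Fin (d + 1) → ℝ)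
    (hgrad : ∀ i x, b.coord i x = ⟪grad i, x⟫_ℝ + cst i)
    (θ : Fin (d + 1) → EuclideanSpace ℝ (Fin d) → ℝ)
    (hθ : ∀ i x, θ i x = b.coord i x * (d * b.coord i x - 2) / (2 * ‖grad i‖)) :
    ∀ i : Fin (d + 1),
      (∃ (B : EuclideanSpace ℝ (Fin d) →L[ℝ] EuclideanSpace ℝ (Fin d) →L[ℝ] ℝ)
          (L : EuclideanSpace ℝ (Fin d) →L[ℝ] ℝ) (c : ℝ),
          ∀ x, θ i x = B x x + L x + c) ∧
      (∀ j k, j ≠ k → ∫ x in S j k, θ i x ∂(μH[(d : ℝ) - 2]) = 0) ∧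
      (∀ k, (μH[(d : ℝ) - 1] (F k)).toReal⁻¹
          * ∫ x in F k, fderiv ℝ (θ i) x (n k) ∂(μH[(d : ℝ) - 1])
            = if i = k then 1 else 0) := by
  intro i
  classical
  have hgc : ∀ x y : EuclideanSpace ℝ (Fin d),
      b.coord i x - b.coord i y = ⟪grad i, x - y⟫_ℝ := by
    intro x y
    rw [hgrad i x, hgrad i y, inner_sub_right]
    ring
  have hgne : grad i ≠ 0 := by
    obtain ⟨j₀, hj₀⟩ : ∃ j : Fin (d+1), j ≠ i := by
      rcases eq_or_ne i ⟨0, by omega⟩ with h | h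
      · exact ⟨⟨1, by omega⟩, by rw [h]; simp [Fin.ext_iff]⟩
      · exact ⟨⟨0, by omega⟩, fun hc => h (hc ▸ rfl)⟩
    intro h
    have h1 := hgc (b i) (b j₀)
    rw [h, inner_zero_left, b.coord_apply, b.coord_apply, if_pos rfl,
      if_neg (Ne.symm hj₀)] at h1
    norm_num at h1
  have hN : 0 < ‖grad i‖ := norm_pos_iff.mpr hgne
  have hθf : ∀ y, θ i y = (⟪grad i, y⟫_ℝ + cst i)
      * ((d:ℝ) * (⟪grad i, y⟫_ℝ + cst i) - 2) / (2 * ‖grad i‖) := by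
    intro y
    rw [hθ i y, hgrad i y]
  have hder := morley_fderiv (grad i) (cst i) ‖grad i‖ (θ i) hθf
  have hder' : ∀ (x v : EuclideanSpace ℝ (Fin d)), fderiv ℝ (θ i) x v
      = (2*(d:ℝ)*(b.coord i x) - 2) / (2*‖grad i‖) * ⟪grad i, v⟫_ℝ := by
    intro x v
    rw [hder x v, ← hgrad i x]
  refine ⟨?_, ?_, ?_⟩
  · -- quadratic
    refine ⟨(((d:ℝ)/(2*‖grad i‖)) • (innerSL ℝ (grad i))).smulRight (innerSL ℝ (grad i)),
      ((2*(d:ℝ)*cst i - 2)/(2*‖grad i‖)) • (innerSL ℝ (grad i)),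
      cst i * ((d:ℝ) * cst i - 2)/(2*‖grad i‖), ?_⟩
    intro x
    rw [hθ i x, hgrad i x]
    simp only [ContinuousLinearMap.smulRight_apply, ContinuousLinearMap.smul_apply,
      ContinuousLinearMap.coe_smul', Pi.smul_apply, smul_eq_mul, innerSL_apply_apply]
    field_simp
    ring
  · -- subsimplex integrals vanish
    intro j k hjk
    set u : Finset (Fin (d+1)) := ({j, k} : Finset (Fin (d+1)))ᶜ with hu
    have hSu : S j k = convexHull ℝ (⇑b '' ↑u) := by
      rw [hS j k, hu]
      congr 2
      ext l
      simp only [Set.mem_compl_iff, Set.mem_insert_iff, Set.mem_singleton_iff, Finset.coe_compl,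
        Finset.coe_insert, Finset.coe_singleton, Finset.mem_coe, Finset.mem_compl,
        Finset.mem_insert, Finset.mem_singleton]
    have hmemu : ∀ l, l ∉ u ↔ l = j ∨ l = k := by
      intro l
      simp only [hu, Finset.mem_compl, not_not, Finset.mem_insert, Finset.mem_singleton]
    have hSmeas : MeasurableSet (S j k) := by
      rw [hSu]; exact morley_hull_measurable b u
    by_cases hij : i = j ∨ i = k
    · have hvan : ∀ x ∈ S j k, θ i x = (fun _ => (0:ℝ)) x := by
        intro x hx
        rw [hSu, morley_hull_char] at hx
        have hc0 : b.coord i x = 0 := hx.2 i ((hmemu i).mpr hij)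
        rw [hθ i x, hc0]
        simp
      rw [setIntegral_congr_fun hSmeas hvan]
      simp
    · push_neg at hij
      by_cases hd2 : d = 2
      · have hvan : ∀ x ∈ S j k, θ i x = (fun _ => (0:ℝ)) x := by
          intro x hx
          rw [hSu, morley_hull_char] at hx
          have hothers : ∀ l, l ≠ i → b.coord l x = 0 := by
            intro l hl
            apply hx.2
            rw [hmemu]
            have hl3 := l.isLt
            have hi3 := i.isLt
            have hj3 := j.isLt
            have hk3 := k.isLt
            simp only [ne_eq, Fin.ext_iff] at hl hjk hij ⊢
            omega
          have hsum := b.sum_coord_apply_eq_one x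
          rw [Finset.sum_eq_single i (fun l _ hl => hothers l hl) (by simp)] at hsum
          have hdr : (d:ℝ) = 2 := by norm_num [hd2]
          rw [hθ i x, hsum, hdr]
          norm_num
        rw [setIntegral_congr_fun hSmeas hvan]
        simp
      · have hcardu : u.card = (d - 2) + 1 := by
          rw [hu, Finset.card_compl, Finset.card_insert_of_notMem (by simp [hjk]),
            Finset.card_singleton, Fintype.card_fin]
          omega
        have hiu : i ∈ u := by
          rw [hu, Finset.mem_compl]
          simp [hij.1, hij.2]
        have hm1 : 1 ≤ d - 2 := by omega
        have hfin := (morley_fin_pos b u hcardu).1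
        have hexp : ((d:ℝ) - 2) = (((d - 2 : ℕ)) : ℝ) := by
          rw [Nat.cast_sub (by omega : 2 ≤ d)]
          norm_num
        rw [hSu, hexp]
        obtain ⟨hI1, hI2⟩ := morley_integral_pow b u hiu hm1 hfin
        haveI : IsFiniteMeasure ((μH[((d - 2 : ℕ) : ℝ)]
            : Measure (EuclideanSpace ℝ (Fin d))).restrict (convexHull ℝ (⇑b '' ↑u))) :=
          ⟨by rwa [Measure.restrict_apply_univ]⟩
        have hbd01 : ∀ x ∈ convexHull ℝ (⇑b '' ↑u), 0 ≤ b.coord i x ∧ b.coord i x ≤ 1 :=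
          fun x hx => morley_coord_le_one b u i hx
        have hint1 : Integrable (fun x => b.coord i x)
            ((μH[((d - 2 : ℕ) : ℝ)] : Measure (EuclideanSpace ℝ (Fin d))).restrict
              (convexHull ℝ (⇑b '' ↑u))) :=
          morley_integrable b u hfin (morley_coord_continuous b i) (M := 1)
            (fun x hx => by rw [abs_of_nonneg (hbd01 x hx).1]; exact (hbd01 x hx).2)
        have hint2 : Integrable (fun x => (b.coord i x)^2)
            ((μH[((d - 2 : ℕ) : ℝ)] : Measure (EuclideanSpace ℝ (Fin d))).restrict
              (convexHull ℝ (⇑b '' ↑u))) :=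
          morley_integrable b u hfin ((morley_coord_continuous b i).pow 2) (M := 1)
            (fun x hx => by
              obtain ⟨h0, h1⟩ := hbd01 x hx
              rw [abs_of_nonneg (sq_nonneg _)]
              nlinarith)
        have hcong : ∀ x ∈ convexHull ℝ (⇑b '' ↑u), θ i x
            = (fun y => ((d:ℝ) * (b.coord i y)^2 - 2 * b.coord i y) * (2*‖grad i‖)⁻¹) x := by
          intro x _
          rw [hθ i x]
          field_simp
        rw [setIntegral_congr_fun (morley_hull_measurable b u) hcong, integral_mul_const,
          integral_sub (hint2.const_mul _) (hint1.const_mul _),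
          integral_const_mul, integral_const_mul, hI1, hI2]
        rw [← hexp]
        have hdle : (2:ℝ) ≤ (d:ℝ) := by exact_mod_cast hd
        have hz1 : (d:ℝ) - 2 + 1 ≠ 0 := by linarith
        have hz2 : (d:ℝ) - 2 + 2 ≠ 0 := by linarith
        have hz3 : ‖grad i‖ ≠ 0 := ne_of_gt hN
        field_simp [hz1, hz2, hz3]
        ring
  · -- normal derivative means
    intro k
    set u : Finset (Fin (d+1)) := ({k} : Finset (Fin (d+1)))ᶜ with hu
    have hFu : F k = convexHull ℝ (⇑b '' ↑u) := by
      rw [hF k, hu]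
      congr 2
      ext l
      simp
    have hcardu : u.card = (d - 1) + 1 := by
      rw [hu, Finset.card_compl, Finset.card_singleton, Fintype.card_fin]
      omega
    have hexp : ((d:ℝ) - 1) = (((d - 1 : ℕ)) : ℝ) := by
      rw [Nat.cast_sub (by omega : 1 ≤ d)]
      norm_num
    obtain ⟨hfin, hpos⟩ := morley_fin_pos b u hcardu
    have hFmeas : MeasurableSet (F k) := by
      rw [hFu]; exact morley_hull_measurable b u
    have htR : 0 < (μH[((d - 1 : ℕ) : ℝ)] (convexHull ℝ (⇑b '' ↑u))).toReal :=
      ENNReal.toReal_pos (ne_of_gt hpos) (ne_of_lt hfin)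
    rw [hexp]
    rcases eq_or_ne i k with rfl | hik
    · -- i = k
      have hinner : ⟪grad i, n i⟫_ℝ = -‖grad i‖ := by
        apply morley_normal hd b i (grad i) hgc (n i) (hn i)
        · intro x hx y hy
          exact hperp i x (by rw [hFu]; exact hx) y (by rw [hFu]; exact hy)
        · intro x hx
          exact houter i x (by rw [hFu]; exact hx)
      rw [hFu]
      have hvan : ∀ x ∈ convexHull ℝ (⇑b '' ↑u),
          (fun y => fderiv ℝ (θ i) y (n i)) x = (fun _ => (1:ℝ)) x := by
        intro x hx
        have hc0 : b.coord i x = 0 := by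
          rw [morley_hull_char] at hx
          exact hx.2 i (by simp [hu])
        show fderiv ℝ (θ i) x (n i) = 1
        rw [hder' x (n i), hc0, hinner]
        field_simp
        ring
      rw [setIntegral_congr_fun (morley_hull_measurable b u) hvan, setIntegral_const,
        smul_eq_mul, mul_one, if_pos rfl]
      exact inv_mul_cancel₀ (ne_of_gt htR)
    · -- i ≠ k
      have hiu : i ∈ u := by
        rw [hu, Finset.mem_compl]
        simp [hik]
      have hm1' : 1 ≤ d - 1 := by omega
      have hI1 := (morley_integral_pow b u hiu hm1' hfin).1
      haveI : IsFiniteMeasure ((μH[((d - 1 : ℕ) : ℝ)]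
          : Measure (EuclideanSpace ℝ (Fin d))).restrict (convexHull ℝ (⇑b '' ↑u))) :=
        ⟨by rwa [Measure.restrict_apply_univ]⟩
      have hbd01 : ∀ x ∈ convexHull ℝ (⇑b '' ↑u), 0 ≤ b.coord i x ∧ b.coord i x ≤ 1 :=
        fun x hx => morley_coord_le_one b u i hx
      have hint1 : Integrable (fun x => b.coord i x)
          ((μH[((d - 1 : ℕ) : ℝ)] : Measure (EuclideanSpace ℝ (Fin d))).restrict
            (convexHull ℝ (⇑b '' ↑u))) :=
        morley_integrable b u hfin (morley_coord_continuous b i) (M := 1)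
          (fun x hx => by rw [abs_of_nonneg (hbd01 x hx).1]; exact (hbd01 x hx).2)
      rw [hFu]
      have hcong : ∀ x ∈ convexHull ℝ (⇑b '' ↑u), (fun y => fderiv ℝ (θ i) y (n k)) x
          = (fun y => ((d:ℝ) * (⟪grad i, n k⟫_ℝ / ‖grad i‖)) * b.coord i y
              - ⟪grad i, n k⟫_ℝ / ‖grad i‖) x := by
        intro x _
        show fderiv ℝ (θ i) x (n k) = _
        rw [hder' x (n k)]
        field_simp
      rw [setIntegral_congr_fun (morley_hull_measurable b u) hcong,
        integral_sub (hint1.const_mul _) (integrable_const _),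
        integral_const_mul, integral_const, hI1, measureReal_restrict_apply_univ, measureReal_def]
      have hd1 : ((d - 1 : ℕ) : ℝ) + 1 = (d:ℝ) := by
        rw [Nat.cast_sub (by omega : 1 ≤ d)]
        ring
      rw [hd1, if_neg hik, smul_eq_mul]
      have hdd : ((d:ℝ)) ≠ 0 := by positivity
      have hbracket : ((d:ℝ) * (⟪grad i, n k⟫_ℝ / ‖grad i‖))
          * ((μH[((d - 1 : ℕ) : ℝ)] (convexHull ℝ (⇑b '' ↑u))).toReal / (d:ℝ))
          - (μH[((d - 1 : ℕ) : ℝ)] (convexHull ℝ (⇑b '' ↑u))).toReal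
              * (⟪grad i, n k⟫_ℝ / ‖grad i‖) = 0 := by
        field_simp
        ring
      rw [hbracket, mul_zero]

end Morley
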